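/- arXiv:1910.08095 — 2 statements merged into one kernel-verified Lean document; each statement's English description precedes it below -/
import Mathlib

section
/- The automorphism group of the Heawood graph has order 336. -/
/-- The Heawood graph `C₁₄` on vertex set `ZMod 14`: distinct vertices `i` and `j` are
adjacent iff `j = i ± 1`, or `i` is even and `j = i + 5`, or `i` is odd and `j = i - 5`
(LCF notation `[5, -5]⁷`). -/
def heawood : SimpleGraph (ZMod 14) where
  Adj i j := i ≠ j ∧ (j = i + 1 ∨ j = i - 1 ∨
    (i.val % 2 = 0 ∧ j = i + 5) ∨ (i.val % 2 = 1 ∧ j = i - 5))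
  symm := by constructor; intro i j h; revert i j; decide
  loopless := by constructor; intro i h; revert i h; decide

/-!
The Heawood graph is cubic, so it has `14 * 3 * 2 ^ 3 = 336` four-arcs, and its automorphism
group acts on them regularly.

Transitivity is built up along the arc `0, 1, 2, 3, 4`: the reflections `v ↦ a - v` (`a` odd)
make the graph vertex-transitive, and for each proper prefix of the arc, involutions fixing that
prefix move its first extension onto all the others. Freeness: an automorphism fixing
`0, 1, 2, 3, 4` fixes every vertex, since a fixed vertex with two fixed neighbours has its third
neighbour fixed too, and `13` is the unique common neighbour of `0` and `12`.
-/

open Finset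

theorem List.cons_injective_left {α : Type*} (l : List α) : Function.Injective (· :: l) :=
  fun _ _ h => (List.cons_eq_cons.1 h).1

namespace SimpleGraph

variable {V : Type*} {G : SimpleGraph V}

theorem Iso.apply_eq_self_of_neighborFinset_eq [Fintype V] [DecidableEq V] [DecidableRel G.Adj]
    (g : G ≃g G) {a u₁ u₂ v : V} (hN : G.neighborFinset a = {u₁, u₂, v}) (ha : g a = a)
    (h₁ : g u₁ = u₁) (h₂ : g u₂ = u₂) : g v = v := by
  have hv : G.Adj a v := (mem_neighborFinset _ _ _).1 (by simp [hN])
  have hgv : g v ∈ G.neighborFinset a := by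
    rw [mem_neighborFinset]
    simpa [ha] using g.map_adj_iff.2 hv
  rw [hN, mem_insert, mem_insert, mem_singleton] at hgv
  rcases hgv with h | h | h
  · obtain rfl := g.injective (h.trans h₁.symm)
    exact h₁
  · obtain rfl := g.injective (h.trans h₂.symm)
    exact h₂
  · exact h

theorem Iso.apply_eq_self_of_common_neighbor (g : G ≃g G) {a b v : V} (ha : g a = a)
    (hb : g b = b) (hav : G.Adj a v) (hvb : G.Adj v b)
    (huniq : ∀ w, G.Adj a w → G.Adj w b → w = v) : g v = v :=
  huniq _ (by simpa [ha] using g.map_adj_iff.2 hav) (by simpa [hb] using g.map_adj_iff.2 hvb)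

section Arcs

variable [Fintype V] [DecidableEq V] [DecidableRel G.Adj]

variable (G)

/- `G.arcs n` is the set of `n`-arcs (walks of length `n` that never immediately backtrack),
each stored last vertex first, so that extending an arc is `List.cons`. -/

def arcExtensions : List V → Finset V
  | [] => ∅
  | [v] => G.neighborFinset v
  | v :: u :: _ => (G.neighborFinset v).erase u

def arcs : ℕ → Finset (List V)
  | 0 => (univ : Finset V).map ⟨fun v => [v], List.singleton_injective⟩
  | n + 1 => (arcs n).biUnion fun l =>
      (G.arcExtensions l).map ⟨(· :: l), List.cons_injective_left l⟩

def MapsOntoArcs (n : ℕ) (b : List V) : Prop :=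
  ∀ l ∈ G.arcs n, ∃ g : G ≃g G, b.map g = l

variable {G}

theorem mem_arcs_zero {l : List V} : l ∈ G.arcs 0 ↔ ∃ v, [v] = l := by
  simp [arcs]

theorem card_arcs_zero : (G.arcs 0).card = Fintype.card V := by
  simp [arcs]

theorem mem_arcs_succ {n : ℕ} {l : List V} :
    l ∈ G.arcs (n + 1) ↔ ∃ l' ∈ G.arcs n, ∃ v ∈ G.arcExtensions l', v :: l' = l := by
  simp [arcs]

theorem card_arcs_succ (n : ℕ) :
    (G.arcs (n + 1)).card = ∑ l ∈ G.arcs n, (G.arcExtensions l).card := by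
  rw [arcs, card_biUnion]
  · simp only [card_map]
  · intro l _ l' _ hne
    rw [Function.onFun, Finset.disjoint_left]
    simp only [mem_map, Function.Embedding.coeFn_mk]
    rintro _ ⟨v, -, rfl⟩ ⟨v', -, h⟩
    exact hne (List.cons_eq_cons.1 h).2.symm

-- Otherwise elaborating `l ∈ heawood.arcs 4` may unfold it and evaluate all 336 arcs.
attribute [irreducible] arcs

theorem cons_mem_arcs_succ {n : ℕ} {l : List V} {v : V} :
    v :: l ∈ G.arcs (n + 1) ↔ l ∈ G.arcs n ∧ v ∈ G.arcExtensions l := by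
  simp [mem_arcs_succ]

theorem exists_eq_cons_of_mem_arcs {n : ℕ} {l : List V} (hl : l ∈ G.arcs n) :
    ∃ v l', l = v :: l' := by
  cases n with
  | zero => obtain ⟨v, rfl⟩ := mem_arcs_zero.1 hl; exact ⟨v, [], rfl⟩
  | succ n => obtain ⟨l', -, v, -, rfl⟩ := mem_arcs_succ.1 hl; exact ⟨v, l', rfl⟩

theorem adj_of_mem_arcExtensions_cons {u v : V} :
    ∀ {l : List V}, v ∈ G.arcExtensions (u :: l) → G.Adj u v
  | [], h => (mem_neighborFinset _ _ _).1 h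
  | _ :: _, h => (mem_neighborFinset _ _ _).1 (mem_of_mem_erase h)

theorem card_arcs {d : ℕ} (hG : G.IsRegularOfDegree d) (n : ℕ) :
    (G.arcs (n + 1)).card = Fintype.card V * d * (d - 1) ^ n := by
  induction n with
  | zero =>
    rw [card_arcs_succ, sum_const_nat (m := d), card_arcs_zero, pow_zero, mul_one]
    intro l hl
    obtain ⟨v, rfl⟩ := mem_arcs_zero.1 hl
    exact (card_neighborFinset_eq_degree G v).trans (hG v)
  | succ n ih =>
    rw [card_arcs_succ, sum_const_nat (m := d - 1), ih, pow_succ, mul_assoc]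
    intro l hl
    obtain ⟨v, l', rfl⟩ := exists_eq_cons_of_mem_arcs hl
    obtain ⟨u, l'', rfl⟩ := exists_eq_cons_of_mem_arcs (cons_mem_arcs_succ.1 hl).1
    have hu : u ∈ G.neighborFinset v := (mem_neighborFinset _ _ _).2
      (adj_of_mem_arcExtensions_cons (cons_mem_arcs_succ.1 hl).2).symm
    rw [arcExtensions, card_erase_of_mem hu, card_neighborFinset_eq_degree, hG v]

theorem Iso.apply_mem_arcExtensions_map_iff (g : G ≃g G) {w : V} :
    ∀ {l : List V}, g w ∈ G.arcExtensions (l.map g) ↔ w ∈ G.arcExtensions l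
  | [] => by simp [arcExtensions]
  | [v] => by simp [arcExtensions, g.map_adj_iff]
  | v :: u :: _ => by simp [arcExtensions, g.map_adj_iff, g.injective.ne_iff]

theorem Iso.map_mem_arcs (g : G ≃g G) {n : ℕ} {l : List V} (hl : l ∈ G.arcs n) :
    l.map g ∈ G.arcs n := by
  induction n generalizing l with
  | zero =>
    obtain ⟨v, rfl⟩ := mem_arcs_zero.1 hl
    exact mem_arcs_zero.2 ⟨g v, rfl⟩
  | succ n ih =>
    obtain ⟨l', hl', v, hv, rfl⟩ := mem_arcs_succ.1 hl
    exact cons_mem_arcs_succ.2 ⟨ih hl', g.apply_mem_arcExtensions_map_iff.2 hv⟩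

theorem MapsOntoArcs.cons {n : ℕ} {b : List V} {v : V} (hb : G.MapsOntoArcs n b)
    (hstab : ∀ w ∈ G.arcExtensions b, ∃ g : G ≃g G, b.map g = b ∧ g v = w) :
    G.MapsOntoArcs (n + 1) (v :: b) := by
  intro l hl
  obtain ⟨l', hl', w, hw, rfl⟩ := mem_arcs_succ.1 hl
  obtain ⟨g, rfl⟩ := hb l' hl'
  rw [← g.apply_symm_apply w, g.apply_mem_arcExtensions_map_iff] at hw
  obtain ⟨h, hhb, hhv⟩ := hstab _ hw
  refine ⟨h.trans g, ?_⟩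
  simp [← List.map_map, hhb, hhv]

theorem natCard_iso_eq_card_arcs {n : ℕ} {b : List V} (hb : b ∈ G.arcs n)
    (hsurj : G.MapsOntoArcs n b) (hfree : ∀ g : G ≃g G, b.map g = b → ∀ v, g v = v) :
    Nat.card (G ≃g G) = (G.arcs n).card := by
  let f : (G ≃g G) → G.arcs n := fun g => ⟨b.map g, g.map_mem_arcs hb⟩
  have hf : Function.Bijective f := by
    refine ⟨fun g g' hgg' => ?_, fun ⟨l, hl⟩ => ?_⟩
    · have hbg : b.map g = b.map g' := congrArg Subtype.val hgg'
      have hfix := hfree (g.trans g'.symm) (by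
        rw [show ⇑(g.trans g'.symm) = g'.symm ∘ g from rfl, ← List.map_map, hbg, List.map_map]
        simp [Function.comp_def])
      ext v
      simpa using congrArg g' (hfix v)
    · obtain ⟨g, rfl⟩ := hsurj l hl
      exact ⟨g, rfl⟩
  rw [Nat.card_congr (Equiv.ofBijective f hf), Nat.card_eq_fintype_card, Fintype.card_coe]

end Arcs

end SimpleGraph

open SimpleGraph Equiv

instance : DecidableRel heawood.Adj := fun i j =>
  inferInstanceAs (Decidable (i ≠ j ∧ (j = i + 1 ∨ j = i - 1 ∨
    (i.val % 2 = 0 ∧ j = i + 5) ∨ (i.val % 2 = 1 ∧ j = i - 5))))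

theorem heawood_isRegularOfDegree : heawood.IsRegularOfDegree 3 := by
  unfold IsRegularOfDegree
  decide

def heawoodReflection (a : ZMod 14) (ha : a.val % 2 = 1) : heawood ≃g heawood :=
  ⟨Equiv.subLeft a, by revert ha; revert a; decide⟩

theorem heawood_exists_apply_zero (a : ZMod 14) : ∃ g : heawood ≃g heawood, g 0 = a := by
  by_cases ha : a.val % 2 = 1
  · exact ⟨heawoodReflection a ha, sub_zero a⟩
  · have ha' : (a + 1).val % 2 = 1 := by revert ha; revert a; decide
    refine ⟨(heawoodReflection 1 rfl).trans (heawoodReflection (a + 1) ha'), ?_⟩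
    show a + 1 - (1 - 0) = a
    ring

/- `heawoodFlipX_Y` fixes the arc `0, …, X - 1` and maps its extension `X` to `Y`. -/

def heawoodFlip1_5 : heawood ≃g heawood :=
  ⟨swap 1 5 * swap 2 4 * swap 6 10 * swap 7 9, by decide⟩

def heawoodFlip1_13 : heawood ≃g heawood :=
  ⟨swap 1 13 * swap 2 8 * swap 3 9 * swap 10 12, by decide⟩

def heawoodFlip2_10 : heawood ≃g heawood :=
  ⟨swap 2 10 * swap 3 9 * swap 7 11 * swap 8 12, by decide⟩

def heawoodFlip3_7 : heawood ≃g heawood :=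
  ⟨swap 3 7 * swap 4 6 * swap 8 12 * swap 9 11, by decide⟩

def heawoodFlip4_12 : heawood ≃g heawood :=
  ⟨swap 4 12 * swap 5 13 * swap 6 8 * swap 9 11, by decide⟩

theorem heawood_mapsOntoArcs : heawood.MapsOntoArcs 4 [4, 3, 2, 1, 0] := by
  have vertex : heawood.MapsOntoArcs 0 [0] := by
    intro l hl
    obtain ⟨a, rfl⟩ := mem_arcs_zero.1 hl
    obtain ⟨g, hg⟩ := heawood_exists_apply_zero a
    exact ⟨g, by simp [hg]⟩
  refine (((vertex.cons ?_).cons ?_).cons ?_).cons ?_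
  · intro w hw
    obtain rfl | rfl | rfl : w = 1 ∨ w = 5 ∨ w = 13 := by revert w; decide
    exacts [⟨1, rfl, rfl⟩, ⟨heawoodFlip1_5, by decide, by decide⟩,
      ⟨heawoodFlip1_13, by decide, by decide⟩]
  · intro w hw
    obtain rfl | rfl : w = 2 ∨ w = 10 := by revert w; decide
    exacts [⟨1, rfl, rfl⟩, ⟨heawoodFlip2_10, by decide, by decide⟩]
  · intro w hw
    obtain rfl | rfl : w = 3 ∨ w = 7 := by revert w; decide
    exacts [⟨1, rfl, rfl⟩, ⟨heawoodFlip3_7, by decide, by decide⟩]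
  · intro w hw
    obtain rfl | rfl : w = 4 ∨ w = 12 := by revert w; decide
    exacts [⟨1, rfl, rfl⟩, ⟨heawoodFlip4_12, by decide, by decide⟩]

theorem heawood_mem_arcs : [4, 3, 2, 1, 0] ∈ heawood.arcs 4 := by
  simp only [cons_mem_arcs_succ]
  exact ⟨⟨⟨⟨mem_arcs_zero.2 ⟨0, rfl⟩, by decide⟩, by decide⟩, by decide⟩, by decide⟩

theorem heawood_apply_eq_self_of_map_arc_eq (g : heawood ≃g heawood)
    (hg : [4, 3, 2, 1, 0].map g = [4, 3, 2, 1, 0]) (v : ZMod 14) : g v = v := by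
  simp only [List.map_cons, List.map_nil, List.cons.injEq] at hg
  obtain ⟨h4, h3, h2, h1, h0, -⟩ := hg
  have h10 := g.apply_eq_self_of_neighborFinset_eq (v := 10) (by decide) h1 h0 h2
  have h7 := g.apply_eq_self_of_neighborFinset_eq (v := 7) (by decide) h2 h1 h3
  have h12 := g.apply_eq_self_of_neighborFinset_eq (v := 12) (by decide) h3 h2 h4
  have h13 := g.apply_eq_self_of_common_neighbor (v := 13) h0 h12 (by decide) (by decide)
    (by decide)
  have h5 := g.apply_eq_self_of_neighborFinset_eq (v := 5) (by decide) h0 h1 h13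
  have h9 := g.apply_eq_self_of_neighborFinset_eq (v := 9) (by decide) h4 h3 h5
  have h8 := g.apply_eq_self_of_neighborFinset_eq (v := 8) (by decide) h13 h12 h0
  have h6 := g.apply_eq_self_of_neighborFinset_eq (v := 6) (by decide) h7 h8 h2
  have h11 := g.apply_eq_self_of_neighborFinset_eq (v := 11) (by decide) h10 h9 h1
  fin_cases v <;> assumption

/-- The automorphism group of the Heawood graph has order 336. -/
theorem heawood_aut_card : Nat.card (heawood ≃g heawood) = 336 := by
  calc Nat.card (heawood ≃g heawood) = (heawood.arcs 4).card :=
        natCard_iso_eq_card_arcs heawood_mem_arcs heawood_mapsOntoArcs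
          heawood_apply_eq_self_of_map_arc_eq
    _ = Fintype.card (ZMod 14) * 3 * (3 - 1) ^ 3 := card_arcs heawood_isRegularOfDegree 3
    _ = 336 := by norm_num [ZMod.card]
end

section
/- Every automorphism of order 3 of the Heawood graph fixes precisely two vertices. -/
namespace SimpleGraph

variable {V : Type*} {G : SimpleGraph V}

lemma Iso.toEquiv_pow (f : G ≃g G) (n : ℕ) :
    ((f ^ n : G ≃g G) : V ≃ V) = (f : V ≃ V) ^ n := by
  induction n with
  | zero => rfl
  | succ n ih => rw [pow_succ, pow_succ, ← ih]; rfl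

lemma Iso.ncard_fixedPoints_modEq [Finite V] {p : ℕ} [Fact p.Prime] (f : G ≃g G)
    (hf : f ^ p = 1) : {v | f v = v}.ncard ≡ Nat.card V [MOD p] := by
  classical
  have : Fintype V := Fintype.ofFinite V
  have hσ : (f : V ≃ V) ^ p ^ 1 = 1 := by rw [pow_one, ← Iso.toEquiv_pow, hf]; rfl
  convert Equiv.Perm.card_compl_support_modEq hσ using 1
  · rw [Set.ncard_eq_toFinset_card']
    congr 1
    ext v
    simp
  · exact Nat.card_eq_fintype_card

variable [G.LocallyFinite] {f : G ≃g G}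

lemma Iso.apply_eq_self_of_adj_of_adj (hf : f ^ 3 = 1) {u v w : V} (hv : G.degree v ≤ 3)
    (huv : G.Adj u v) (hvw : G.Adj v w) (hfu : f u = u) (hfv : f v = v) : f w = w := by
  classical
  by_contra hfw
  have hf3 : f (f (f w)) = w := DFunLike.congr_fun hf w
  have hadj : ∀ {x}, G.Adj v x → G.Adj v (f x) := fun h => hfv ▸ f.map_adj_iff.mpr h
  have hsub : {u, w, f w, f (f w)} ⊆ G.neighborFinset v := by
    intro x hx
    simp only [Finset.mem_insert, Finset.mem_singleton] at hx
    rcases hx with rfl | rfl | rfl | rfl <;> rw [mem_neighborFinset]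
    exacts [huv.symm, hvw, hadj hvw, hadj (hadj hvw)]
  have hwu : w ≠ u := by rintro rfl; exact hfw hfu
  have hfwu : f w ≠ u := hfu ▸ f.injective.ne hwu
  have hffwu : f (f w) ≠ u := hfu ▸ f.injective.ne hfwu
  have hffww : f (f w) ≠ w := fun h => hfw (by rwa [h] at hf3)
  have hffwfw : f (f w) ≠ f w := f.injective.ne hfw
  have hcard : ({u, w, f w, f (f w)} : Finset V).card = 4 := by
    rw [Finset.card_insert_of_notMem (by simp [hwu.symm, hfwu.symm, hffwu.symm]),
      Finset.card_insert_of_notMem (by simp [Ne.symm hfw, hffww.symm]),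
      Finset.card_pair hffwfw.symm]
  have := (Finset.card_le_card hsub).trans_eq (G.card_neighborFinset_eq_degree v)
  omega

lemma Iso.apply_eq_self_of_reachable (hf : f ^ 3 = 1) (hdeg : ∀ v, G.degree v ≤ 3) {u v w : V}
    (huv : G.Adj u v) (hfu : f u = u) (hfv : f v = v) (hvw : G.Reachable v w) : f w = w := by
  obtain ⟨p⟩ := hvw
  induction p generalizing u with
  | nil => exact hfv
  | cons hvx _ ih => exact ih hvx hfv (f.apply_eq_self_of_adj_of_adj hf (hdeg _) huv hvx hfu hfv)

lemma Iso.not_adj_of_apply_eq_self (hconn : G.Connected) (hdeg : ∀ v, G.degree v ≤ 3)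
    (hf : f ^ 3 = 1) (hf1 : f ≠ 1) {u v : V} (hfu : f u = u) (hfv : f v = v) : ¬G.Adj u v :=
  fun huv => hf1 <| RelIso.ext fun w => f.apply_eq_self_of_reachable hf hdeg huv hfu hfv (hconn v w)

lemma Iso.commonNeighbors_eq_empty_of_apply_eq_self (hconn : G.Connected)
    (hdeg : ∀ v, G.degree v ≤ 3) (hf : f ^ 3 = 1) (hf1 : f ≠ 1) {u v : V}
    (hcommon : (G.commonNeighbors u v).Subsingleton) (hfu : f u = u) (hfv : f v = v) :
    G.commonNeighbors u v = ∅ := by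
  refine Set.eq_empty_of_forall_notMem fun x hx => ?_
  have hfx : f x ∈ G.commonNeighbors u v := by
    rw [mem_commonNeighbors] at hx ⊢
    exact ⟨hfu ▸ f.map_adj_iff.mpr hx.1, hfv ▸ f.map_adj_iff.mpr hx.2⟩
  exact f.not_adj_of_apply_eq_self hconn hdeg hf hf1 hfu (hcommon hfx hx)
    ((mem_commonNeighbors _).1 hx).1

end SimpleGraph

open SimpleGraph

instance inst_s12 : DecidableRel heawood.Adj := fun i j =>
  decidable_of_iff (i ≠ j ∧ (j = i + 1 ∨ j = i - 1 ∨
    (i.val % 2 = 0 ∧ j = i + 5) ∨ (i.val % 2 = 1 ∧ j = i - 5))) Iff.rfl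

lemma heawood_degree (v : ZMod 14) : heawood.degree v = 3 := by
  revert v; decide

lemma heawood_adj_add_one (i : ZMod 14) : heawood.Adj i (i + 1) := by
  revert i; decide

lemma heawood_connected : heawood.Connected := by
  refine (connected_iff_exists_forall_reachable _).2 ⟨0, fun w => ?_⟩
  rw [← ZMod.natCast_zmod_val w]
  induction w.val with
  | zero => rw [Nat.cast_zero]
  | succ n ih => rw [Nat.cast_succ]; exact ih.trans (heawood_adj_add_one _).reachable

lemma heawood_commonNeighbors_subsingleton {u v : ZMod 14} (huv : u ≠ v) :
    (heawood.commonNeighbors u v).Subsingleton := by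
  intro x hx y hy
  rw [mem_commonNeighbors] at hx hy
  revert huv hx hy; revert u v x y; decide

lemma heawood_commonNeighbors_nonempty {u v : ZMod 14} (huv : u ≠ v)
    (hparity : u.val % 2 = v.val % 2) : (heawood.commonNeighbors u v).Nonempty := by
  suffices ∃ x, heawood.Adj u x ∧ heawood.Adj v x from this
  revert huv hparity; revert u v; decide

lemma heawood_ncard_fixedPoints_le_two {f : heawood ≃g heawood} (hf : f ^ 3 = 1) (hf1 : f ≠ 1) :
    {v | f v = v}.ncard ≤ 2 := by
  have hparity : Set.InjOn (fun v : ZMod 14 => v.val % 2) {v | f v = v} := by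
    intro u hu v hv huv
    by_contra hne
    have hempty := f.commonNeighbors_eq_empty_of_apply_eq_self heawood_connected
      (fun v => (heawood_degree v).le) hf hf1 (heawood_commonNeighbors_subsingleton hne) hu hv
    exact (heawood_commonNeighbors_nonempty hne huv).ne_empty hempty
  calc {v | f v = v}.ncard ≤ ({0, 1} : Set ℕ).ncard :=
        Set.ncard_le_ncard_of_injOn _ (fun v _ => Nat.mod_two_eq_zero_or_one v.val)
          hparity (Set.toFinite _)
    _ = 2 := Set.ncard_pair zero_ne_one

/-- Every automorphism of order 3 of the Heawood graph fixes precisely two vertices. -/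
theorem heawood_order_three_fixes_two_vertices (α : heawood ≃g heawood)
    (hα : orderOf α = 3) :
    {v : ZMod 14 | α v = v}.ncard = 2 := by
  have hcube : α ^ 3 = 1 := hα ▸ pow_orderOf_eq_one α
  have hne : α ≠ 1 := by rintro rfl; simp at hα
  have hmod : {v | α v = v}.ncard ≡ 14 [MOD 3] := by
    simpa using α.ncard_fixedPoints_modEq hcube
  have hle := heawood_ncard_fixedPoints_le_two hcube hne
  unfold Nat.ModEq at hmod
  omega
end
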